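/- arXiv:2204.03364 — 5 statements merged into one kernel-verified Lean document; each statement's English description precedes it below -/
import Mathlib

section
/- Let Λ ∈ ℝ^{n×n} be a matrix in Jordan canonical form such that every eigenvalue of Λ has geometric multiplicity 1 (Λ is non-derogatory). Then the pair (Λ, 𝟏_n) is controllable, i.e., the controllability matrix [𝟏_n, Λ𝟏_n, ..., Λ^{n-1}𝟏_n] has rank n, where 𝟏_n is the all-ones vector. -/
/-!
Write `dⱼ = Λ j j`. Applying `Λ - d_{n-1}, Λ - d_{n-2}, …, Λ - d_{j+1}` to `𝟏` in turn yields a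
vector of the Krylov space supported on the indices `≤ j` with a nonzero entry at `j`: inside a
Jordan block the superdiagonal `1` moves the nonzero entry up by one index, and across a block
boundary the entry is multiplied by `dⱼ - d_{j+1} ≠ 0`, since different blocks carry different
eigenvalues. The same reason keeps the entries at all earlier block ends nonzero, which is the
invariant of the induction. The `n` vectors so obtained form a triangular family with nonzero
diagonal, hence span.
-/

open Matrix

section Krylov

variable {R ι : Type*} [CommSemiring R] [Fintype ι] [DecidableEq ι]

def krylovSpan (A : Matrix ι ι R) (v : ι → R) (m : ℕ) : Submodule R (ι → R) :=
  Submodule.span R {u | ∃ i, i < m ∧ u = (A ^ i) *ᵥ v}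

variable {A : Matrix ι ι R} {v : ι → R}

lemma krylovSpan_mono : Monotone (krylovSpan A v) := fun _ _ hm =>
  Submodule.span_mono fun _ ⟨i, hi, hu⟩ => ⟨i, hi.trans_le hm, hu⟩

lemma self_mem_krylovSpan_one : v ∈ krylovSpan A v 1 :=
  Submodule.subset_span ⟨0, zero_lt_one, by rw [pow_zero, one_mulVec]⟩

lemma mulVec_mem_krylovSpan_succ {m : ℕ} {w : ι → R} (hw : w ∈ krylovSpan A v m) :
    A *ᵥ w ∈ krylovSpan A v (m + 1) := by
  have hmap : (krylovSpan A v m).map A.mulVecLin ≤ krylovSpan A v (m + 1) := by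
    rw [krylovSpan, Submodule.map_span]
    refine Submodule.span_mono ?_
    rintro _ ⟨_, ⟨i, hi, rfl⟩, rfl⟩
    exact ⟨i + 1, by omega, by rw [mulVecLin_apply, mulVec_mulVec, pow_succ']⟩
  exact hmap ⟨w, hw, rfl⟩

end Krylov

theorem Submodule.eq_top_of_triangular_family {K ι : Type*} [Field K] [Fintype ι]
    [LinearOrder ι] (S : Submodule K (ι → K)) (v : ι → ι → K) (hv_mem : ∀ j, v j ∈ S)
    (hv_lt : ∀ j k, j < k → v j k = 0) (hv_diag : ∀ j, v j j ≠ 0) : S = ⊤ := by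
  have hlower : (Matrix.of v).IsLowerTriangular := fun j k hjk => hv_lt j k hjk
  have hdet : (Matrix.of v).det ≠ 0 := by
    rw [det_of_isLowerTriangular _ hlower]
    exact Finset.prod_ne_zero_iff.mpr fun j _ => hv_diag j
  have hspan := (linearIndependent_rows_of_det_ne_zero hdet).span_eq_top_of_card_eq_finrank'
    (Module.finrank_fintype_fun_eq_card K).symm
  exact top_le_iff.mp (hspan ▸ Submodule.span_le.mpr (Set.range_subset_iff.mpr hv_mem))

section JordanForm

variable {K : Type*} [Field K] {n : ℕ}

def IsUpperBidiagonal (Λ : Matrix (Fin n) (Fin n) K) : Prop :=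
  ∀ i j : Fin n, (j : ℕ) ≠ i → (j : ℕ) ≠ i + 1 → Λ i j = 0

def IsBlockEnd (Λ : Matrix (Fin n) (Fin n) K) (i : Fin n) : Prop :=
  ∀ hi : (i : ℕ) + 1 < n, Λ i ⟨i + 1, hi⟩ = 0

structure IsJordanForm (Λ : Matrix (Fin n) (Fin n) K) : Prop where
  upperBidiagonal : IsUpperBidiagonal Λ
  superdiag_eq_zero_or_one : ∀ (i : Fin n) (hi : (i : ℕ) + 1 < n),
    Λ i ⟨i + 1, hi⟩ = 0 ∨ Λ i ⟨i + 1, hi⟩ = 1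
  diag_eq_of_superdiag_eq_one : ∀ (i : Fin n) (hi : (i : ℕ) + 1 < n),
    Λ i ⟨i + 1, hi⟩ = 1 → Λ i i = Λ ⟨i + 1, hi⟩ ⟨i + 1, hi⟩

def IsPivotVector (Λ : Matrix (Fin n) (Fin n) K) (j : ℕ) (w : Fin n → K) : Prop :=
  (∀ k : Fin n, j < k → w k = 0) ∧
    ∀ i : Fin n, (i : ℕ) ≤ j → ((i : ℕ) = j ∨ IsBlockEnd Λ i) → w i ≠ 0

variable {Λ : Matrix (Fin n) (Fin n) K}

lemma IsUpperBidiagonal.mulVec_apply_of_succ_lt (hΛ : IsUpperBidiagonal Λ) {i : Fin n}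
    (hi : (i : ℕ) + 1 < n) (w : Fin n → K) :
    (Λ *ᵥ w) i = Λ i i * w i + Λ i ⟨i + 1, hi⟩ * w ⟨i + 1, hi⟩ :=
  Fintype.sum_eq_add i ⟨i + 1, hi⟩ (Fin.ne_of_val_ne (by simp)) fun k hk =>
    mul_eq_zero_of_left (hΛ i k (Fin.val_ne_of_ne hk.1) fun h => hk.2 (Fin.ext h)) (w k)

lemma IsUpperBidiagonal.mulVec_apply_of_isBlockEnd (hΛ : IsUpperBidiagonal Λ) {i : Fin n}
    (hi : IsBlockEnd Λ i) (w : Fin n → K) : (Λ *ᵥ w) i = Λ i i * w i := by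
  by_cases hi' : (i : ℕ) + 1 < n
  · rw [hΛ.mulVec_apply_of_succ_lt hi', hi hi', zero_mul, add_zero]
  · exact Fintype.sum_eq_single i fun k hk =>
      mul_eq_zero_of_left (hΛ i k (Fin.val_ne_of_ne hk) (by omega)) (w k)

lemma IsPivotVector.mulVec_sub_smul (hJ : IsJordanForm Λ)
    (hsep : ∀ i j : Fin n, i < j → IsBlockEnd Λ i → Λ i i ≠ Λ j j)
    {j : Fin n} (hj : (j : ℕ) + 1 < n) {w : Fin n → K} (hw : IsPivotVector Λ (j + 1) w) :
    IsPivotVector Λ j (Λ *ᵥ w - Λ ⟨j + 1, hj⟩ ⟨j + 1, hj⟩ • w) := by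
  set j' : Fin n := ⟨j + 1, hj⟩
  have hΛ := hJ.upperBidiagonal
  simp only [IsPivotVector, Pi.sub_apply, Pi.smul_apply, smul_eq_mul]
  refine ⟨fun k hk => ?_, fun i hij hi => ?_⟩
  · have hk_diag : (Λ *ᵥ w) k = Λ k k * w k := by
      by_cases hk' : (k : ℕ) + 1 < n
      · rw [hΛ.mulVec_apply_of_succ_lt hk', hw.1 ⟨k + 1, hk'⟩ (by dsimp only; omega), mul_zero,
          add_zero]
      · exact hΛ.mulVec_apply_of_isBlockEnd (fun h => absurd h hk') w
    rw [hk_diag, ← sub_mul]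
    rcases eq_or_ne (k : ℕ) (j + 1) with hkj | hkj
    · rw [show k = j' from Fin.ext hkj, sub_self, zero_mul]
    · rw [hw.1 k (by omega), mul_zero]
  · by_cases hend : IsBlockEnd Λ i
    · rw [hΛ.mulVec_apply_of_isBlockEnd hend, ← sub_mul]
      have hij' : i < j' := Fin.lt_def.mpr (by dsimp only [j']; omega)
      exact mul_ne_zero (sub_ne_zero.mpr (hsep i j' hij' hend)) (hw.2 i (by omega) (Or.inr hend))
    · obtain rfl : i = j := Fin.ext (hi.resolve_right hend)
      obtain ⟨hi', hs⟩ : ∃ hi' : (i : ℕ) + 1 < n, Λ i ⟨i + 1, hi'⟩ ≠ 0 := by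
        simpa [IsBlockEnd] using hend
      have hs1 := (hJ.superdiag_eq_zero_or_one i hi').resolve_left hs
      rw [hΛ.mulVec_apply_of_succ_lt hi', hs1, hJ.diag_eq_of_superdiag_eq_one i hi' hs1,
        one_mul, add_sub_cancel_left]
      exact hw.2 j' le_rfl (Or.inl rfl)

lemma exists_isPivotVector_mem_krylovSpan (hJ : IsJordanForm Λ)
    (hsep : ∀ i j : Fin n, i < j → IsBlockEnd Λ i → Λ i i ≠ Λ j j) (m : ℕ) :
    ∀ j : ℕ, j + m + 1 = n → ∃ w ∈ krylovSpan Λ 1 (m + 1), IsPivotVector Λ j w := by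
  induction m with
  | zero =>
    intro j hj
    exact ⟨1, self_mem_krylovSpan_one, fun k hk => absurd k.isLt (by omega),
      fun _ _ _ => one_ne_zero⟩
  | succ m ih =>
    intro j hj
    obtain ⟨w, hw_mem, hw⟩ := ih (j + 1) (by omega)
    refine ⟨_, sub_mem (mulVec_mem_krylovSpan_succ hw_mem)
      (Submodule.smul_mem _ _ (krylovSpan_mono (by omega) hw_mem)),
      hw.mulVec_sub_smul (j := ⟨j, by omega⟩) hJ hsep (by dsimp only; omega)⟩

end JordanForm

/-- If `Λ` is a real matrix in Jordan canonical form that is non-derogatory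
(every eigenvalue has geometric multiplicity 1, i.e. any two equal diagonal
entries belong to the same Jordan block), then `(Λ, 𝟏ₙ)` is controllable. -/
theorem jordan_nonderogatory_controllable {n : ℕ}
    (Λ : Matrix (Fin n) (Fin n) ℝ)
    -- Λ is in Jordan form: nonzero entries only on the diagonal and superdiagonal
    (hzero : ∀ i j : Fin n, (j : ℕ) ≠ (i : ℕ) → (j : ℕ) ≠ (i : ℕ) + 1 → Λ i j = 0)
    -- superdiagonal entries are 0 or 1
    (hsup01 : ∀ (i : Fin n) (hi : (i : ℕ) + 1 < n),
      Λ i ⟨(i : ℕ) + 1, hi⟩ = 0 ∨ Λ i ⟨(i : ℕ) + 1, hi⟩ = 1)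
    -- within a Jordan block the diagonal entry is constant
    (hblock : ∀ (i : Fin n) (hi : (i : ℕ) + 1 < n),
      Λ i ⟨(i : ℕ) + 1, hi⟩ = 1 → Λ i i = Λ ⟨(i : ℕ) + 1, hi⟩ ⟨(i : ℕ) + 1, hi⟩)
    -- non-derogatory: equal eigenvalues lie in the same Jordan block, i.e. all
    -- superdiagonal entries between two equal diagonal entries are 1
    (hnonderog : ∀ i j : Fin n, (i : ℕ) < (j : ℕ) → Λ i i = Λ j j →
      ∀ (k : Fin n) (hk : (k : ℕ) + 1 < n), (i : ℕ) ≤ (k : ℕ) → (k : ℕ) < (j : ℕ) →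
        Λ k ⟨(k : ℕ) + 1, hk⟩ = 1) :
    Submodule.span ℝ
      {v : Fin n → ℝ | ∃ i : ℕ, i < n ∧ v = (Λ ^ i).mulVec (fun _ => 1)} = ⊤ := by
  have hJ : IsJordanForm Λ := ⟨hzero, hsup01, hblock⟩
  have hsep : ∀ i j : Fin n, i < j → IsBlockEnd Λ i → Λ i i ≠ Λ j j := by
    intro i j hij hi heq
    have hi' : (i : ℕ) + 1 < n := by omega
    have := hnonderog i j hij heq i hi' le_rfl hij
    rw [hi hi'] at this
    exact zero_ne_one this
  have hpivot (j : Fin n) : ∃ w ∈ krylovSpan Λ 1 n, IsPivotVector Λ j w := by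
    obtain ⟨w, hw_mem, hw⟩ :=
      exists_isPivotVector_mem_krylovSpan hJ hsep (n - 1 - j) j (by omega)
    exact ⟨w, krylovSpan_mono (by omega) hw_mem, hw⟩
  choose w hw_mem hw using hpivot
  exact Submodule.eq_top_of_triangular_family _ w hw_mem (fun j k hjk => (hw j).1 k hjk)
    fun j => (hw j).2 j le_rfl (Or.inl rfl)
end

section
/- Suppose (X, p) is controllable, where X ∈ ℝ^{n×n} and p ∈ ℝ^n. For any q ∈ ℝ^n, if X + p·qᵀ and X do not share any eigenvalue, then the pair (Xᵀ + q·pᵀ, q) is controllable. -/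
open Matrix

private lemma aux_pow_mem_span {n : ℕ} (M : Matrix (Fin n) (Fin n) ℝ) (k : ℕ) :
    M ^ k ∈ Submodule.span ℝ
      {A : Matrix (Fin n) (Fin n) ℝ | ∃ i : ℕ, i < n ∧ A = M ^ i} := by
  rcases Nat.eq_zero_or_pos n with hn | hn
  · subst hn
    have : M ^ k = 0 := Subsingleton.elim _ _
    rw [this]; exact Submodule.zero_mem _
  induction k using Nat.strong_induction_on with
  | _ k ih =>
    by_cases hk : k < n
    · exact Submodule.subset_span ⟨k, hk, rfl⟩
    · push_neg at hk
      have hdeg : M.charpoly.natDegree = n := by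
        simpa using M.charpoly_natDegree_eq_dim
      have hCH := M.aeval_self_charpoly
      rw [Polynomial.aeval_eq_sum_range, hdeg, Finset.sum_range_succ] at hCH
      have hcn : M.charpoly.coeff n = 1 := by
        have := M.charpoly_monic.coeff_natDegree
        rwa [hdeg] at this
      rw [hcn, one_smul] at hCH
      have h1 : M ^ n = ∑ i ∈ Finset.range n, (-(M.charpoly.coeff i)) • M ^ i := by
        have := eq_neg_of_add_eq_zero_right hCH
        rw [this, ← Finset.sum_neg_distrib]
        exact Finset.sum_congr rfl fun i _ => (neg_smul _ _).symm
      have h2 : M ^ k = ∑ i ∈ Finset.range n, (-(M.charpoly.coeff i)) • M ^ (k - n + i) := by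
        calc M ^ k = M ^ (k - n) * M ^ n := by rw [← pow_add]; congr 1; omega
          _ = ∑ i ∈ Finset.range n, (-(M.charpoly.coeff i)) • (M ^ (k - n) * M ^ i) := by
              rw [h1, Finset.mul_sum]
              exact Finset.sum_congr rfl fun i _ => Matrix.mul_smul _ _ _
          _ = ∑ i ∈ Finset.range n, (-(M.charpoly.coeff i)) • M ^ (k - n + i) := by
              refine Finset.sum_congr rfl fun i _ => ?_
              rw [← pow_add]
      rw [h2]
      refine Submodule.sum_mem _ fun i hi => Submodule.smul_mem _ _ ?_
      have hilt : k - n + i < k := by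
        have := Finset.mem_range.mp hi; omega
      exact ih _ hilt

private lemma aux_mem_spectrum {n : ℕ} (A : Matrix (Fin n) (Fin n) ℂ) (μ : ℂ)
    (u : Fin n → ℂ) (hu : u ≠ 0) (h : A *ᵥ u = μ • u) : μ ∈ spectrum ℂ A := by
  rw [spectrum.mem_iff]
  intro hI
  rw [Matrix.isUnit_iff_isUnit_det] at hI
  have hdet : (algebraMap ℂ (Matrix (Fin n) (Fin n) ℂ) μ - A).det = 0 := by
    rw [← Matrix.exists_mulVec_eq_zero_iff]
    refine ⟨u, hu, ?_⟩
    rw [Matrix.sub_mulVec, h, Algebra.algebraMap_eq_smul_one, Matrix.smul_mulVec,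
      Matrix.one_mulVec, sub_self]
  rw [hdet] at hI
  simpa using hI

/-- Lemma 2: if `(X, p)` is controllable and `X + p qᵀ` shares no eigenvalue with
`X`, then `(Xᵀ + q pᵀ, q)` is controllable. -/
theorem controllable_transpose_rank_one_update {n : ℕ}
    (X : Matrix (Fin n) (Fin n) ℝ) (p q : Fin n → ℝ)
    (hctrb : Submodule.span ℝ
      {v : Fin n → ℝ | ∃ i : ℕ, i < n ∧ v = (X ^ i).mulVec p} = ⊤)
    (hspec : spectrum ℂ ((X + Matrix.vecMulVec p q).map Complex.ofReal) ∩
      spectrum ℂ (X.map Complex.ofReal) = ∅) :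
    Submodule.span ℝ
      {v : Fin n → ℝ | ∃ i : ℕ, i < n ∧
        v = ((Xᵀ + Matrix.vecMulVec q p) ^ i).mulVec q} = ⊤ := by
  by_contra hne
  set M : Matrix (Fin n) (Fin n) ℝ := X + Matrix.vecMulVec p q with hMdef
  have hT : Xᵀ + Matrix.vecMulVec q p = Mᵀ := by
    rw [hMdef, Matrix.transpose_add]
    congr 1
    ext i j
    simp [Matrix.vecMulVec_apply, mul_comm]
  obtain ⟨φ, hφ0, hφmap⟩ :=
    Submodule.exists_dual_map_eq_bot_of_lt_top (lt_top_iff_ne_top.mpr hne) inferInstance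
  set w : Fin n → ℝ := fun j => φ (Pi.single j 1) with hwdef
  have hφ_eq : ∀ u : Fin n → ℝ, φ u = u ⬝ᵥ w := by
    intro u
    have hu : u = ∑ j, u j • (Pi.single j 1 : Fin n → ℝ) := by
      ext i
      simp [Pi.single_apply, Finset.sum_apply]
    conv_lhs => rw [hu]
    rw [map_sum]
    simp only [LinearMap.map_smul, smul_eq_mul]
    rfl
  have hwne : w ≠ 0 := by
    intro h0
    apply hφ0
    refine LinearMap.ext fun u => ?_
    rw [hφ_eq, h0, dotProduct_zero, LinearMap.zero_apply]
  have hker : ∀ v ∈ Submodule.span ℝ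
      {v : Fin n → ℝ | ∃ i : ℕ, i < n ∧ v = ((Xᵀ + Matrix.vecMulVec q p) ^ i).mulVec q},
      φ v = 0 := by
    intro v hv
    have : φ v ∈ Submodule.map φ (Submodule.span ℝ _) := Submodule.mem_map_of_mem hv
    rw [hφmap] at this
    simpa using this
  have hsmall : ∀ i < n, q ⬝ᵥ (M ^ i *ᵥ w) = 0 := by
    intro i hi
    have hv : ((Xᵀ + Matrix.vecMulVec q p) ^ i).mulVec q ∈ Submodule.span ℝ
        {v : Fin n → ℝ | ∃ i : ℕ, i < n ∧ v = ((Xᵀ + Matrix.vecMulVec q p) ^ i).mulVec q} :=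
      Submodule.subset_span ⟨i, hi, rfl⟩
    have h0 := hker _ hv
    rw [hφ_eq] at h0
    rw [hT, ← Matrix.transpose_pow, Matrix.mulVec_transpose] at h0
    rwa [Matrix.dotProduct_mulVec]
  have hkey : ∀ i : ℕ, q ⬝ᵥ (M ^ i *ᵥ w) = 0 := by
    intro i
    let F : Matrix (Fin n) (Fin n) ℝ →ₗ[ℝ] ℝ :=
      { toFun := fun A => q ⬝ᵥ (A *ᵥ w)
        map_add' := fun A B => by simp [Matrix.add_mulVec, dotProduct_add]
        map_smul' := fun c A => by
          simp [Matrix.smul_mulVec, dotProduct_smul, smul_eq_mul] }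
    have hF : Submodule.span ℝ {A : Matrix (Fin n) (Fin n) ℝ | ∃ i : ℕ, i < n ∧ A = M ^ i}
        ≤ LinearMap.ker F := by
      rw [Submodule.span_le]
      rintro A ⟨j, hj, rfl⟩
      exact hsmall j hj
    exact hF (aux_pow_mem_span M i)
  -- complexify
  set Mc : Matrix (Fin n) (Fin n) ℂ := M.map Complex.ofReal with hMc
  set qc : Fin n → ℂ := fun j => (q j : ℂ) with hqc
  set wc : Fin n → ℂ := fun j => (w j : ℂ) with hwc
  have hMc_pow : ∀ i : ℕ, Mc ^ i = (M ^ i).map Complex.ofReal := by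
    intro i
    induction i with
    | zero => simp [Matrix.map_one]
    | succ i ih =>
      rw [pow_succ, pow_succ, ih, hMc,
        show Complex.ofReal = ⇑Complex.ofRealHom from rfl]
      exact Matrix.map_mul.symm
  have hmapmv : ∀ (A : Matrix (Fin n) (Fin n) ℝ) (v : Fin n → ℝ),
      (A.map Complex.ofReal) *ᵥ (fun j => (v j : ℂ)) = fun j => (((A *ᵥ v) j : ℝ) : ℂ) := by
    intro A v
    ext j
    simp [Matrix.mulVec, dotProduct, Matrix.map_apply]
  have hdotc : ∀ (y : Fin n → ℝ), qc ⬝ᵥ (fun j => ((y j : ℝ) : ℂ)) = ((q ⬝ᵥ y : ℝ) : ℂ) := by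
    intro y
    simp [dotProduct, hqc]
  set S : Submodule ℂ (Fin n → ℂ) :=
    { carrier := {u | ∀ i : ℕ, qc ⬝ᵥ (Mc ^ i *ᵥ u) = 0}
      add_mem' := fun {a b} ha hb i => by
        rw [Matrix.mulVec_add, dotProduct_add, ha i, hb i, add_zero]
      zero_mem' := fun i => by rw [Matrix.mulVec_zero, dotProduct_zero]
      smul_mem' := fun c a ha i => by
        rw [Matrix.mulVec_smul, dotProduct_smul, ha i, smul_zero] } with hS
  have hwcS : wc ∈ S := by
    intro i
    rw [hMc_pow i, hwc, hmapmv, hdotc, hkey i, Complex.ofReal_zero]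
  have hwcne : wc ≠ 0 := by
    intro h0
    apply hwne
    funext j
    show w j = (0 : ℝ)
    have h1 : ((w j : ℝ) : ℂ) = 0 := congrFun h0 j
    exact_mod_cast h1
  haveI : Nontrivial S := nontrivial_of_ne ⟨wc, hwcS⟩ 0
    (fun h => hwcne (congrArg Subtype.val h))
  have hinv : ∀ u ∈ S, Mc *ᵥ u ∈ S := by
    intro u hu i
    have := hu (i + 1)
    rwa [pow_succ, ← Matrix.mulVec_mulVec] at this
  set f : Module.End ℂ S := (Matrix.mulVecLin Mc).restrict hinv with hf
  obtain ⟨μ, hμ⟩ := Module.End.exists_eigenvalue f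
  obtain ⟨uu, huu⟩ := hμ.exists_hasEigenvector
  have hueq : Mc *ᵥ (uu : Fin n → ℂ) = μ • (uu : Fin n → ℂ) :=
    congrArg Subtype.val huu.apply_eq_smul
  have hune : (uu : Fin n → ℂ) ≠ 0 := by
    intro h0
    exact huu.right (Subtype.coe_injective h0)
  have hq0 : qc ⬝ᵥ (uu : Fin n → ℂ) = 0 := by
    have h00 : qc ⬝ᵥ (Mc ^ 0 *ᵥ (uu : Fin n → ℂ)) = 0 := uu.2 0
    simpa using h00
  have hXeq : (X.map Complex.ofReal) *ᵥ (uu : Fin n → ℂ) = μ • (uu : Fin n → ℂ) := by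
    have hsplit : Mc = X.map Complex.ofReal + (Matrix.vecMulVec p q).map Complex.ofReal := by
      rw [hMc, hMdef]
      exact Matrix.map_add _ Complex.ofReal_add _ _
    have hrank1 : (Matrix.vecMulVec p q).map Complex.ofReal *ᵥ (uu : Fin n → ℂ) = 0 := by
      ext i
      simp only [Matrix.mulVec, dotProduct, Matrix.map_apply, Matrix.vecMulVec_apply,
        Pi.zero_apply]
      have hqdot : qc ⬝ᵥ (uu : Fin n → ℂ) = ∑ j, (q j : ℂ) * (uu : Fin n → ℂ) j := rfl
      calc ∑ j, ((p i * q j : ℝ) : ℂ) * (uu : Fin n → ℂ) j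
          = (p i : ℂ) * ∑ j, (q j : ℂ) * (uu : Fin n → ℂ) j := by
            rw [Finset.mul_sum]
            refine Finset.sum_congr rfl fun j _ => ?_
            push_cast
            ring
        _ = 0 := by rw [← hqdot, hq0, mul_zero]
    rw [hsplit, Matrix.add_mulVec, hrank1, add_zero] at hueq
    exact hueq
  have hμM : μ ∈ spectrum ℂ ((X + Matrix.vecMulVec p q).map Complex.ofReal) :=
    aux_mem_spectrum _ μ _ hune hueq
  have hμX : μ ∈ spectrum ℂ (X.map Complex.ofReal) :=
    aux_mem_spectrum _ μ _ hune hXeq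
  have : μ ∈ spectrum ℂ ((X + Matrix.vecMulVec p q).map Complex.ofReal) ∩
      spectrum ℂ (X.map Complex.ofReal) := ⟨hμM, hμX⟩
  rw [hspec] at this
  exact this
end

section
/- Suppose (X, p) is controllable with X ∈ ℝ^{n×n}, p ∈ ℝ^n, and let φ(s) = det(sI - X) be the characteristic polynomial of X. Let Y ∈ ℝ^{m×m} and q ∈ ℝ^m satisfy φ(Y)·q = 0. Then there exists a matrix T ∈ ℝ^{m×n} such that T·X = Y·T and T·p = q. -/
open Matrix Polynomial

private lemma krylov_step {n l : ℕ} (φ : Polynomial ℝ) (hmon : φ.Monic)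
    (hdeg : φ.natDegree = n)
    (Z : Matrix (Fin l) (Fin l) ℝ) (r : Fin l → ℝ)
    (hz : (Polynomial.aeval Z φ).mulVec r = 0) :
    Z * (Matrix.of fun i (k : Fin n) => ((Z ^ (k : ℕ)).mulVec r) i)
      = (Matrix.of fun i (k : Fin n) => ((Z ^ (k : ℕ)).mulVec r) i) *
        (Matrix.of fun (j k : Fin n) =>
          if (k : ℕ) + 1 = n then -(φ.coeff j) else if (j : ℕ) = (k : ℕ) + 1 then 1 else 0) := by
  have hpow : ∀ i (k : ℕ), ((Z ^ (k + 1)).mulVec r) i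
      = ∑ j, Z i j * ((Z ^ k).mulVec r) j := by
    intro i k
    rw [pow_succ']
    simp [Matrix.mulVec, Matrix.mul_apply, dotProduct, Finset.mul_sum, Finset.sum_mul,
      mul_assoc]
    rw [Finset.sum_comm]
  have hZn : ∀ i : Fin l, ((Z ^ n).mulVec r) i
      = -∑ j : Fin n, φ.coeff j * ((Z ^ (j : ℕ)).mulVec r) i := by
    intro i
    have h1 : Polynomial.aeval Z φ = ∑ k ∈ Finset.range (n + 1), φ.coeff k • Z ^ k := by
      rw [Polynomial.aeval_eq_sum_range' (by omega : φ.natDegree < n + 1)]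
    have h2 := congrFun hz i
    rw [h1] at h2
    simp only [Matrix.mulVec, dotProduct, Matrix.sum_apply, Matrix.smul_apply,
      Finset.sum_mul, smul_eq_mul, Pi.zero_apply] at h2
    rw [Finset.sum_comm] at h2
    have h3 : ∑ k ∈ Finset.range (n + 1), ∑ j, φ.coeff k * (Z ^ k) i j * r j = 0 := h2
    rw [Finset.sum_range_succ] at h3
    have hcn : φ.coeff n = 1 := by
      have := hmon.coeff_natDegree
      rwa [hdeg] at this
    have h4 : ∑ j, (Z ^ n) i j * r j
        = -∑ k ∈ Finset.range n, ∑ j, φ.coeff k * (Z ^ k) i j * r j := by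
      simp [hcn] at h3 ⊢
      linarith
    simp only [Matrix.mulVec, dotProduct]
    rw [h4, Fin.sum_univ_eq_sum_range (fun j => φ.coeff j * ∑ j', (Z ^ j) i j' * r j')]
    congr 1
    exact Finset.sum_congr rfl fun k _ => by simp [Finset.mul_sum, mul_assoc]
  ext i k
  rw [Matrix.mul_apply, Matrix.mul_apply]
  have hlhs : ∑ j, Z i j * (Matrix.of fun i (k : Fin n) => ((Z ^ (k : ℕ)).mulVec r) i) j k
      = ((Z ^ ((k : ℕ) + 1)).mulVec r) i := (hpow i k).symm
  rw [hlhs]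
  by_cases hk : (k : ℕ) + 1 = n
  · simp only [Matrix.of_apply, hk, if_true]
    rw [hZn i, ← Finset.sum_neg_distrib]
    exact Finset.sum_congr rfl fun j _ => by ring
  · have hk1 : (k : ℕ) + 1 < n := by omega
    set k' : Fin n := ⟨(k : ℕ) + 1, hk1⟩ with hk'
    have : ∀ j : Fin n, ((j : ℕ) = (k : ℕ) + 1) = (j = k') := by
      intro j; rw [Fin.ext_iff]
    simp only [Matrix.of_apply, hk, if_false, this, mul_ite, mul_one, mul_zero]
    rw [Finset.sum_ite_eq' Finset.univ k' (fun j => ((Z ^ (j : ℕ)).mulVec r) i)]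
    simp [hk']

/-- Lemma 3 (intertwining lemma): if `(X, p)` is controllable and `φ(Y) q = 0`
where `φ` is the characteristic polynomial of `X`, then there is `T` with
`T X = Y T` and `T p = q`. -/
theorem exists_intertwining_of_controllable {n m : ℕ}
    (X : Matrix (Fin n) (Fin n) ℝ) (p : Fin n → ℝ)
    (Y : Matrix (Fin m) (Fin m) ℝ) (q : Fin m → ℝ)
    (hctrb : Submodule.span ℝ
      {v : Fin n → ℝ | ∃ i : ℕ, i < n ∧ v = (X ^ i).mulVec p} = ⊤)
    (hq : (Polynomial.aeval Y X.charpoly).mulVec q = 0) :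
    ∃ T : Matrix (Fin m) (Fin n) ℝ, T * X = Y * T ∧ T.mulVec p = q := by
  rcases Nat.eq_zero_or_pos n with hn | hn
  · subst hn
    refine ⟨0, Subsingleton.elim _ _, ?_⟩
    have hφ : X.charpoly = 1 := by
      rw [Matrix.charpoly, Matrix.det_eq_one_of_card_eq_zero (by simp)]
    rw [hφ] at hq
    simp at hq
    simpa using hq.symm
  · set φ := X.charpoly with hφ
    have hmon : φ.Monic := X.charpoly_monic
    have hdeg : φ.natDegree = n := by simp [hφ]
    set C : Matrix (Fin n) (Fin n) ℝ :=
      Matrix.of fun i (k : Fin n) => ((X ^ (k : ℕ)).mulVec p) i with hC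
    set D : Matrix (Fin m) (Fin n) ℝ :=
      Matrix.of fun i (k : Fin n) => ((Y ^ (k : ℕ)).mulVec q) i with hD
    set A : Matrix (Fin n) (Fin n) ℝ :=
      Matrix.of fun (j k : Fin n) =>
        if (k : ℕ) + 1 = n then -(φ.coeff j) else if (j : ℕ) = (k : ℕ) + 1 then 1 else 0 with hA
    have hXC : X * C = C * A :=
      krylov_step φ hmon hdeg X p (by rw [X.aeval_self_charpoly]; simp)
    have hYD : Y * D = D * A := krylov_step φ hmon hdeg Y q hq
    -- C is invertible
    have hCunit : IsUnit C := by
      rw [← Matrix.mulVec_surjective_iff_isUnit]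
      have hrange : LinearMap.range C.mulVecLin = ⊤ := by
        rw [Matrix.range_mulVecLin, ← hctrb]
        congr 1
        ext v
        constructor
        · rintro ⟨k, rfl⟩
          exact ⟨(k : ℕ), k.isLt, rfl⟩
        · rintro ⟨i, hi, rfl⟩
          exact ⟨⟨i, hi⟩, rfl⟩
      intro v
      obtain ⟨w, hw⟩ := LinearMap.range_eq_top.mp hrange v
      exact ⟨w, hw⟩
    have hdet : IsUnit C.det := (Matrix.isUnit_iff_isUnit_det C).mp hCunit
    have hCC : C * C⁻¹ = 1 := Matrix.mul_nonsing_inv C hdet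
    have hCC' : C⁻¹ * C = 1 := Matrix.nonsing_inv_mul C hdet
    refine ⟨D * C⁻¹, ?_, ?_⟩
    · have : C⁻¹ * X = A * C⁻¹ := by
        calc C⁻¹ * X = C⁻¹ * X * (C * C⁻¹) := by rw [hCC, mul_one]
          _ = C⁻¹ * (X * C) * C⁻¹ := by rw [← mul_assoc, mul_assoc C⁻¹ X C]
          _ = C⁻¹ * (C * A) * C⁻¹ := by rw [hXC]
          _ = (C⁻¹ * C) * A * C⁻¹ := by rw [← mul_assoc C⁻¹ C A]
          _ = A * C⁻¹ := by rw [hCC', one_mul]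
      calc D * C⁻¹ * X = D * (C⁻¹ * X) := Matrix.mul_assoc D C⁻¹ X
        _ = D * (A * C⁻¹) := by rw [this]
        _ = (D * A) * C⁻¹ := (Matrix.mul_assoc D A C⁻¹).symm
        _ = (Y * D) * C⁻¹ := by rw [hYD]
        _ = Y * (D * C⁻¹) := Matrix.mul_assoc Y D C⁻¹
    · have h0 : (0 : ℕ) < n := hn
      set e0 : Fin n → ℝ := Pi.single ⟨0, h0⟩ 1 with he0
      have hCe : C.mulVec e0 = p := by
        ext i
        rw [he0, Matrix.mulVec_single]
        simp [hC]
      have hCinvp : C⁻¹.mulVec p = e0 := by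
        rw [← hCe, Matrix.mulVec_mulVec, hCC', Matrix.one_mulVec]
      rw [← Matrix.mulVec_mulVec, hCinvp]
      ext i
      rw [he0, Matrix.mulVec_single]
      simp [hD]
end

section
/- Let A, Λ, and A_K ≜ A - KCA be n×n real matrices, K ∈ ℝ^{n×m} with columns K_1,...,K_m, and suppose for each i = 1,...,m the matrix F_i ∈ ℝ^{n×n} satisfies F_i·Λ = A_K·F_i and F_i·𝟏_n = K_i. Define sequences ξ_i(k) ∈ ℝ^n by ξ_i(0) = 0 and ξ_i(k+1) = Λ·ξ_i(k) + 𝟏_n·y_i(k+1), and define x̂(k) ∈ ℝ^n by x̂(0) = 0 and x̂(k+1) = A_K·x̂(k) + ∑_{i=1}^m K_i·y_i(k+1). Then for all k ≥ 0, x̂(k) = ∑_{i=1}^m F_i·ξ_i(k). -/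
open Matrix

/-- Lemma 4 (2): the Kalman estimate is losslessly recovered as a linear
combination of the local filters: `x̂(k) = ∑ᵢ Fᵢ ξᵢ(k)`. -/
theorem kalman_decomposition {n m : ℕ}
    (A Λ : Matrix (Fin n) (Fin n) ℝ) (K : Matrix (Fin n) (Fin m) ℝ)
    (C : Matrix (Fin m) (Fin n) ℝ)
    (F : Fin m → Matrix (Fin n) (Fin n) ℝ)
    (y : Fin m → ℕ → ℝ)
    (ξ : Fin m → ℕ → Fin n → ℝ) (xhat : ℕ → Fin n → ℝ)
    (hF1 : ∀ i, F i * Λ = (A - K * C * A) * F i)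
    (hF2 : ∀ i, (F i).mulVec (fun _ => 1) = fun x => K x i)
    (hξ0 : ∀ i, ξ i 0 = 0)
    (hξ : ∀ i k, ξ i (k + 1) = Λ.mulVec (ξ i k) + y i (k + 1) • ((fun _ => (1:ℝ)) : Fin n → ℝ))
    (hx0 : xhat 0 = 0)
    (hx : ∀ k, xhat (k + 1) =
      (A - K * C * A).mulVec (xhat k) + ∑ i, y i (k + 1) • (fun x => K x i)) :
    ∀ k, xhat k = ∑ i, (F i).mulVec (ξ i k) := by
  intro k
  induction k with
  | zero =>
    simp [hx0, hξ0]
  | succ k ih =>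
    rw [hx k, ih]
    have : ∀ i : Fin m, (F i).mulVec (ξ i (k+1)) =
        (A - K * C * A).mulVec ((F i).mulVec (ξ i k)) + y i (k+1) • (fun x => K x i) := by
      intro i
      rw [hξ i k, mulVec_add, mulVec_smul, hF2, mulVec_mulVec, hF1, ← mulVec_mulVec]
    rw [Finset.sum_congr rfl (fun i _ => this i), Finset.sum_add_distrib]
    congr 1
    simp only [← Matrix.mulVecLin_apply, ← map_sum]
end

section
/- Let S ∈ ℝ^{n×n}, P symmetric positive definite, μ_2 ≤ μ_m positive reals, ζ ∈ ℝ with |1 - 2μ_j/(μ_2+μ_m)| ≤ ζ for a given μ_j ∈ [μ_2, μ_m], and suppose P - SᵀPS + (1-ζ²)·(SᵀP𝟏𝟏ᵀPS)/(𝟏ᵀP𝟏) is positive definite. With Γ = (2/(μ_2+μ_m))·(𝟏ᵀPS)/(𝟏ᵀP𝟏), the matrix (S - μ_j·𝟏·Γ)ᵀP(S - μ_j·𝟏·Γ) - P is negative definite, and hence ρ(S - μ_j·𝟏·Γ) < 1. -/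
/-!
Write `w = 𝟏ᵀPS`, `β = 𝟏ᵀP𝟏` and `t = 2μⱼ / ((μ₂ + μₘ) β)`, so that the closed loop matrix is
`A = S - t·𝟏wᵀ`. Since `P` is symmetric, `AᵀPA = SᵀPS + (t²β - 2t)·wwᵀ`, and
`t²β - 2t + (1 - ζ²)/β = ((1 - tβ)² - ζ²)/β ≤ 0`; hence `P - AᵀPA` dominates the Riccati matrix
`P - SᵀPS + (1 - ζ²)/β · wwᵀ ≻ 0`. For an eigenpair `Az = μz` one then has
`z*(P - AᵀPA)z = (1 - |μ|²) z*Pz`, and both quadratic forms are positive, so `|μ| < 1`.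
-/
open Matrix
open scoped ComplexOrder

namespace Matrix

variable {ι : Type*} [Fintype ι]

section RankOne

variable {R : Type*} [CommRing R]

theorem dotProduct_vecMulVec_self_mulVec (w x : ι → R) :
    x ⬝ᵥ vecMulVec w w *ᵥ x = (w ⬝ᵥ x) ^ 2 := by
  rw [vecMulVec_mulVec, op_smul_eq_smul, dotProduct_smul, smul_eq_mul, dotProduct_comm, sq]

theorem transpose_mul_mulVec_eq_vecMul {S P : Matrix ι ι R} (hP : Pᵀ = P) (u : ι → R) :
    (Sᵀ * P) *ᵥ u = u ᵥ* (P * S) := by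
  rw [← mulVec_transpose, transpose_mul, hP]

theorem transpose_mul_mul_sub_smul_vecMulVec {S P : Matrix ι ι R} (hP : Pᵀ = P) (u : ι → R)
    (t : R) :
    (S - t • vecMulVec u (u ᵥ* (P * S)))ᵀ * P * (S - t • vecMulVec u (u ᵥ* (P * S)))
      = Sᵀ * P * S + (t ^ 2 * (u ⬝ᵥ P *ᵥ u) - 2 * t) •
          vecMulVec (u ᵥ* (P * S)) (u ᵥ* (P * S)) := by
  set w := u ᵥ* (P * S)
  have hSw : Sᵀ * P * vecMulVec u w = vecMulVec w w := by
    rw [mul_vecMulVec, transpose_mul_mulVec_eq_vecMul hP]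
  have hwS : vecMulVec w u * P * S = vecMulVec w w := by
    rw [vecMulVec_mul, vecMulVec_mul, vecMul_vecMul]
  have hww : vecMulVec w u * P * vecMulVec u w = (u ⬝ᵥ P *ᵥ u) • vecMulVec w w := by
    rw [vecMulVec_mul, vecMulVec_mul_vecMulVec, vecMulVec_smul, ← dotProduct_mulVec]
  simp only [transpose_sub, transpose_smul, transpose_vecMulVec, sub_mul, mul_sub,
    smul_mul_assoc, mul_smul_comm, hSw, hwS, hww, smul_smul]
  module

end RankOne

theorem dotProduct_mulVec_neg_of_posDef {P Q : Matrix ι ι ℝ} {w : ι → ℝ} {c d : ℝ}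
    (hR : (P - Q + c • vecMulVec w w).PosDef) (hcd : d + c ≤ 0) {x : ι → ℝ} (hx : x ≠ 0) :
    x ⬝ᵥ (Q + d • vecMulVec w w - P) *ᵥ x < 0 := by
  have hpos : 0 < x ⬝ᵥ (P - Q + c • vecMulVec w w) *ᵥ x := by
    simpa using hR.dotProduct_mulVec_pos hx
  have hsplit : Q + d • vecMulVec w w - P
      = (d + c) • vecMulVec w w - (P - Q + c • vecMulVec w w) := by module
  rw [hsplit, sub_mulVec, dotProduct_sub, smul_mulVec, dotProduct_smul,
    dotProduct_vecMulVec_self_mulVec, smul_eq_mul]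
  nlinarith [sq_nonneg (w ⬝ᵥ x)]

theorem exists_mulVec_eq_smul_of_mem_spectrum [DecidableEq ι] {K : Type*} [Field K]
    {A : Matrix ι ι K} {μ : K} (hμ : μ ∈ spectrum K A) : ∃ z ≠ 0, A *ᵥ z = μ • z := by
  rw [← spectrum_toLin', ← Module.End.hasEigenvalue_iff_mem_spectrum] at hμ
  obtain ⟨z, hz⟩ := hμ.exists_hasEigenvector
  exact ⟨z, hz.2, by simpa using hz.apply_eq_smul⟩

/-- Stein's criterion (the discrete Lyapunov theorem). -/
theorem norm_lt_one_of_mem_spectrum_of_posDef [DecidableEq ι] {𝕜 : Type*} [RCLike 𝕜]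
    {A P : Matrix ι ι 𝕜} (hP : P.PosDef) (hQ : (P - Aᴴ * P * A).PosDef) {μ : 𝕜}
    (hμ : μ ∈ spectrum 𝕜 A) : ‖μ‖ < 1 := by
  obtain ⟨z, hz, hAz⟩ := exists_mulVec_eq_smul_of_mem_spectrum hμ
  have hAPA : star z ⬝ᵥ (Aᴴ * P * A) *ᵥ z = star (A *ᵥ z) ⬝ᵥ P *ᵥ (A *ᵥ z) := by
    rw [star_mulVec, ← dotProduct_mulVec, mulVec_mulVec, mulVec_mulVec, Matrix.mul_assoc]
  have hquad : star z ⬝ᵥ (P - Aᴴ * P * A) *ᵥ z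
      = ((1 - ‖μ‖ ^ 2 : ℝ) : 𝕜) * (star z ⬝ᵥ P *ᵥ z) := by
    rw [sub_mulVec, dotProduct_sub, hAPA, hAz, star_smul, mulVec_smul, smul_dotProduct,
      dotProduct_smul, smul_eq_mul, smul_eq_mul, ← mul_assoc, RCLike.star_def, RCLike.conj_mul]
    push_cast
    ring
  have hQz := hQ.re_dotProduct_pos hz
  rw [hquad, RCLike.re_ofReal_mul] at hQz
  have hnorm : 0 < 1 - ‖μ‖ ^ 2 := pos_of_mul_pos_left hQz (hP.re_dotProduct_pos hz).le
  nlinarith [norm_nonneg μ]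

theorem re_star_dotProduct_map_ofReal_mulVec (M : Matrix ι ι ℝ) (z : ι → ℂ) :
    (star z ⬝ᵥ M.map ((↑) : ℝ → ℂ) *ᵥ z).re
      = (fun i ↦ (z i).re) ⬝ᵥ M *ᵥ (fun i ↦ (z i).re)
        + (fun i ↦ (z i).im) ⬝ᵥ M *ᵥ (fun i ↦ (z i).im) := by
  simp only [dotProduct, mulVec, map_apply, Pi.star_apply, Finset.mul_sum, Complex.re_sum,
    ← Finset.sum_add_distrib, RCLike.star_def, Complex.mul_re, Complex.mul_im, Complex.conj_re,
    Complex.conj_im, Complex.ofReal_re, Complex.ofReal_im]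
  refine Finset.sum_congr rfl fun i _ ↦ Finset.sum_congr rfl fun j _ ↦ ?_
  ring

theorem PosDef.map_ofReal {M : Matrix ι ι ℝ} (hM : M.PosDef) :
    (M.map ((↑) : ℝ → ℂ)).PosDef := by
  have hherm : (M.map ((↑) : ℝ → ℂ)).IsHermitian :=
    hM.isHermitian.map _ fun r ↦ (Complex.conj_ofReal r).symm
  refine PosDef.of_dotProduct_mulVec_pos hherm fun z hz ↦ RCLike.pos_iff.mpr
    ⟨?_, hherm.im_star_dotProduct_mulVec_self z⟩
  have hnonneg (x : ι → ℝ) : 0 ≤ x ⬝ᵥ M *ᵥ x := by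
    simpa using hM.posSemidef.dotProduct_mulVec_nonneg x
  have hre_or_im : (fun i ↦ (z i).re) ≠ 0 ∨ (fun i ↦ (z i).im) ≠ 0 := by
    by_contra! h
    exact hz (funext fun i ↦ Complex.ext (congrFun h.1 i) (congrFun h.2 i))
  change 0 < (star z ⬝ᵥ M.map ((↑) : ℝ → ℂ) *ᵥ z).re
  rw [re_star_dotProduct_map_ofReal_mulVec]
  rcases hre_or_im with h | h
  · linarith [hnonneg (fun i ↦ (z i).im), by simpa using hM.dotProduct_mulVec_pos h]
  · linarith [hnonneg (fun i ↦ (z i).re), by simpa using hM.dotProduct_mulVec_pos h]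

theorem norm_lt_one_of_mem_spectrum_of_stein [DecidableEq ι] {A P : Matrix ι ι ℝ}
    (hP : P.PosDef) (hstein : ∀ x : ι → ℝ, x ≠ 0 → x ⬝ᵥ (Aᵀ * P * A - P) *ᵥ x < 0) {μ : ℂ}
    (hμ : μ ∈ spectrum ℂ (A.map ((↑) : ℝ → ℂ))) : ‖μ‖ < 1 := by
  have hPt : Pᵀ = P := (isHermitian_iff_isSymm.mp hP.isHermitian).eq
  have hsymm : (P - Aᵀ * P * A).IsHermitian := by
    rw [isHermitian_iff_isSymm, IsSymm, transpose_sub, transpose_mul, transpose_mul,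
      transpose_transpose, hPt, Matrix.mul_assoc]
  have hQ : (P - Aᵀ * P * A).PosDef := PosDef.of_dotProduct_mulVec_pos hsymm fun x hx ↦ by
    have := hstein x hx
    rw [← neg_sub, neg_mulVec, dotProduct_neg] at this
    simpa using this
  have hmap : (P - Aᵀ * P * A).map ((↑) : ℝ → ℂ)
      = P.map (↑) - (A.map ((↑) : ℝ → ℂ))ᴴ * P.map (↑) * A.map (↑) := by
    ext i j
    simp [mul_apply]
  have hQℂ := hQ.map_ofReal
  rw [hmap] at hQℂ
  exact norm_lt_one_of_mem_spectrum_of_posDef hP.map_ofReal hQℂ hμ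

end Matrix

theorem div_sq_mul_sub_two_mul_div_add_div_nonpos {a β ζ : ℝ} (hβ : 0 ≤ β)
    (ha : |1 - a| ≤ ζ) : (a / β) ^ 2 * β - 2 * (a / β) + (1 - ζ ^ 2) / β ≤ 0 := by
  rcases hβ.eq_or_lt with rfl | hβ
  · simp -- every term vanishes, as `x / 0 = 0`
  have hsq : (1 - a) ^ 2 ≤ ζ ^ 2 := sq_abs (1 - a) ▸ pow_le_pow_left₀ (abs_nonneg _) ha 2
  calc (a / β) ^ 2 * β - 2 * (a / β) + (1 - ζ ^ 2) / β = ((1 - a) ^ 2 - ζ ^ 2) / β := by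
        field_simp
        ring
    _ ≤ 0 := div_nonpos_of_nonpos_of_nonneg (by linarith) hβ.le

theorem riccati_stabilization_general {n : ℕ}
    (S P : Matrix (Fin n) (Fin n) ℝ) (hP : P.PosDef)
    (μ₂ μₘ μj : ℝ)
    (ones : Fin n → ℝ)
    (ζ : ℝ) (hζ : |1 - 2 * μj / (μ₂ + μₘ)| ≤ ζ)
    (hRiccati : (P - Sᵀ * P * S +
      ((1 - ζ ^ 2) / (ones ⬝ᵥ P.mulVec ones)) •
        vecMulVec ((Sᵀ * P).mulVec ones) (ones ᵥ* (P * S))).PosDef)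
    (Γ : Fin n → ℝ)
    (hΓ : Γ = (2 / (μ₂ + μₘ) / (ones ⬝ᵥ P.mulVec ones)) • (ones ᵥ* (P * S))) :
    (∀ x : Fin n → ℝ, x ≠ 0 →
      x ⬝ᵥ ((S - μj • vecMulVec ones Γ)ᵀ * P * (S - μj • vecMulVec ones Γ)
        - P).mulVec x < 0) ∧
    (∀ μ ∈ spectrum ℂ ((S - μj • vecMulVec ones Γ).map Complex.ofReal),
      ‖μ‖ < 1) := by
  have hPt : Pᵀ = P := (isHermitian_iff_isSymm.mp hP.isHermitian).eq
  set β := ones ⬝ᵥ P *ᵥ ones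
  have hβ : 0 ≤ β := by simpa using hP.posSemidef.dotProduct_mulVec_nonneg ones
  have hgain : S - μj • vecMulVec ones Γ
      = S - (2 * μj / (μ₂ + μₘ) / β) • vecMulVec ones (ones ᵥ* (P * S)) := by
    rw [hΓ, vecMulVec_smul, smul_smul]
    ring_nf
  rw [transpose_mul_mulVec_eq_vecMul hPt] at hRiccati
  have hstein : ∀ x : Fin n → ℝ, x ≠ 0 →
      x ⬝ᵥ ((S - μj • vecMulVec ones Γ)ᵀ * P * (S - μj • vecMulVec ones Γ) - P) *ᵥ x < 0 := by
    intro x hx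
    rw [hgain, transpose_mul_mul_sub_smul_vecMulVec hPt]
    refine dotProduct_mulVec_neg_of_posDef hRiccati ?_ hx
    linarith [div_sq_mul_sub_two_mul_div_add_div_nonpos hβ hζ]
  exact ⟨hstein, fun μ hμ ↦ norm_lt_one_of_mem_spectrum_of_stein hP hstein hμ⟩

/-- Core of Lemma 5: the modified algebraic Riccati inequality with parameter
`ζ` yields Schur stability of `S - μj·𝟏·Γ` for every `μj ∈ [μ₂, μₘ]`. -/
theorem riccati_stabilization {n : ℕ}
    (S P : Matrix (Fin n) (Fin n) ℝ) (hP : P.PosDef)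
    (μ₂ μₘ μj : ℝ) (hμ₂ : 0 < μ₂) (hle : μ₂ ≤ μₘ)
    (hμl : μ₂ ≤ μj) (hμu : μj ≤ μₘ)
    (ones : Fin n → ℝ) (hones : ones = fun _ => 1)
    (ζ : ℝ) (hζ : |1 - 2 * μj / (μ₂ + μₘ)| ≤ ζ)
    (hRiccati : (P - Sᵀ * P * S +
      ((1 - ζ ^ 2) / (ones ⬝ᵥ P.mulVec ones)) •
        vecMulVec ((Sᵀ * P).mulVec ones) (ones ᵥ* (P * S))).PosDef)
    (Γ : Fin n → ℝ)
    (hΓ : Γ = (2 / (μ₂ + μₘ) / (ones ⬝ᵥ P.mulVec ones)) • (ones ᵥ* (P * S))) :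
    (∀ x : Fin n → ℝ, x ≠ 0 →
      x ⬝ᵥ ((S - μj • vecMulVec ones Γ)ᵀ * P * (S - μj • vecMulVec ones Γ)
        - P).mulVec x < 0) ∧
    (∀ μ ∈ spectrum ℂ ((S - μj • vecMulVec ones Γ).map Complex.ofReal),
      ‖μ‖ < 1) :=
  riccati_stabilization_general S P hP μ₂ μₘ μj ones ζ hζ hRiccati Γ hΓ
end
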